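/- Let k be an algebraically closed field of characteristic zero and f an element of the algebraic closure of k(t). If f(t+n) = f(t) for some positive integer n (i.e., S_t^n(f) = f for an extension S_t of the shift automorphism), then f ∈ k. -/

import Mathlib

/-!
The shift `σ` restricts to `k(t)` as `t ↦ t + 1`, so `σ ^ n` restricts to `t ↦ t + n`.
If `σ ^ n` fixes `f`, it maps the minimal polynomial of `f` over `k(t)` to a monic polynomial of
the same degree vanishing at `f`, hence fixes it coefficientwise. In characteristic zero a
rational function invariant under `t ↦ t + n` is constant (its monic denominator divides its own
shift, hence equals it; and a shift invariant polynomial `p` is constant since `p - p(0)` vanishes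
at `0, n, 2n, …`). Thus the minimal polynomial of `f` is defined over `k`, and `f ∈ k` because `k` is
algebraically closed.
-/

open Polynomial
open scoped nonZeroDivisors

theorem Polynomial.eq_C_eval_zero_of_comp_X_add_C_eq {R : Type*} [CommRing R] [IsDomain R]
    [CharZero R] {m : R} (hm : m ≠ 0) {p : R[X]} (hp : p.comp (X + C m) = p) :
    p = C (p.eval 0) := by
  have hstep (x : R) : p.eval (x + m) = p.eval x := by
    conv_rhs => rw [← hp]
    simp [eval_comp]
  have hmul (j : ℕ) : p.eval (j * m) = p.eval 0 := by
    induction j with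
    | zero => simp
    | succ j ih => rw [Nat.cast_succ, add_one_mul, hstep, ih]
  rw [← sub_eq_zero]
  refine eq_zero_of_infinite_isRoot _
    (Set.infinite_of_injective_forall_mem (f := fun j : ℕ ↦ (j * m : R)) ?_ ?_)
  · intro a b hab
    exact_mod_cast mul_right_cancel₀ hm hab
  · intro j
    simp [hmul]

namespace RatFunc

variable {K : Type*} [Field K]

theorem ringHom_ext {L : Type*} [CommSemiring L] {φ ψ : RatFunc K →+* L}
    (hC : ∀ a, φ (C a) = ψ (C a)) (hX : φ X = ψ X) : φ = ψ := by
  refine IsLocalization.ringHom_ext K[X]⁰ (Polynomial.ringHom_ext (fun a ↦ ?_) ?_)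
  · simpa [algebraMap_C] using hC a
  · simpa [algebraMap_X] using hX

noncomputable def shift (m : K) : RatFunc K →+* RatFunc K :=
  mapRingHom (algEquivAevalXAddC m)
    (nonZeroDivisors_le_comap_nonZeroDivisors_of_injective _ (algEquivAevalXAddC m).injective)

theorem shift_algebraMap (m : K) (p : K[X]) :
    shift m (algebraMap K[X] (RatFunc K) p) =
      algebraMap K[X] (RatFunc K) (p.comp (Polynomial.X + Polynomial.C m)) := by
  simpa [shift, coe_mapRingHom_eq_coe_map, ← comp_eq_aeval] using
    map_apply_div (R := K) (algEquivAevalXAddC m) _ p 1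

theorem shift_C (m a : K) : shift m (C a) = C a := by
  simpa [algebraMap_C] using shift_algebraMap m (Polynomial.C a)

theorem shift_X (m : K) : shift m X = X + C m := by
  simpa [algebraMap_C, algebraMap_X] using shift_algebraMap m Polynomial.X

theorem eq_C_of_shift_eq [CharZero K] {m : K} (hm : m ≠ 0) {g : RatFunc K}
    (hg : shift m g = g) : ∃ c, g = C c := by
  have hshift : g = algebraMap _ _ (g.num.comp (Polynomial.X + Polynomial.C m)) /
      algebraMap _ _ (g.denom.comp (Polynomial.X + Polynomial.C m)) := by
    conv_lhs => rw [← hg, ← num_div_denom g]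
    rw [map_div₀, shift_algebraMap, shift_algebraMap]
  have hmonic : g.denom.Monic := monic_denom g
  have hdenom_comp : g.denom.comp (Polynomial.X + Polynomial.C m) = g.denom := by
    refine eq_of_monic_of_dvd_of_natDegree_le hmonic (hmonic.comp_X_add_C m) ?_ ?_
    · exact (denom_dvd ((hmonic.comp_X_add_C m).ne_zero)).2 ⟨_, hshift⟩
    · simp [natDegree_comp]
  have hdenom : g.denom = 1 := by
    rw [← hmonic.natDegree_eq_zero, eq_C_eval_zero_of_comp_X_add_C_eq hm hdenom_comp]
    exact natDegree_C _
  have hpoly : g = algebraMap _ _ g.num := by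
    conv_lhs => rw [← num_div_denom g, hdenom, map_one, div_one]
  have hnum_comp : g.num.comp (Polynomial.X + Polynomial.C m) = g.num := by
    rw [hdenom_comp, hdenom, map_one, div_one] at hshift
    exact algebraMap_injective K (hshift.symm.trans hpoly)
  refine ⟨g.num.eval 0, ?_⟩
  conv_lhs => rw [hpoly, eq_C_eval_zero_of_comp_X_add_C_eq hm hnum_comp, algebraMap_C]

theorem ringAut_pow_comp_algebraMap {L : Type*} [CommRing L] [Algebra (RatFunc K) L]
    (σ : RingAut L)
    (hσC : ∀ a, σ (algebraMap (RatFunc K) L (C a)) = algebraMap (RatFunc K) L (C a))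
    (hσX : σ (algebraMap (RatFunc K) L X) = algebraMap (RatFunc K) L X + 1) (n : ℕ) :
    ((σ ^ n : RingAut L) : L →+* L).comp (algebraMap (RatFunc K) L) =
      (algebraMap (RatFunc K) L).comp (shift (n : K)) := by
  refine ringHom_ext (fun a ↦ ?_) ?_
  · simp [shift_C, RingAut.coe_pow, Function.iterate_fixed (hσC a)]
  · simp only [RingHom.coe_comp, RingEquiv.coe_toRingHom, Function.comp_apply, RingAut.coe_pow,
      shift_X, map_add, map_natCast]
    induction n with
    | zero => simp
    | succ n ih =>
      rw [Function.iterate_succ_apply', ih, map_add, hσX, map_natCast]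
      push_cast
      ring

end RatFunc

theorem minpoly_map_eq_self_of_apply_eq {K L : Type*} [Field K] [Field L] [Algebra K L]
    {σ : L →+* L} {τ : K →+* K} (hστ : σ.comp (algebraMap K L) = (algebraMap K L).comp τ)
    {x : L} (hx : IsIntegral K x) (hσx : σ x = x) :
    (minpoly K x).map τ = minpoly K x := by
  have hroot : aeval x ((minpoly K x).map τ) = 0 := by
    rw [aeval_def, eval₂_map, ← hστ, ← hσx, ← hom_eval₂, hσx, ← aeval_def, minpoly.aeval,
      map_zero]
  have hmonic := minpoly.monic hx
  exact eq_of_monic_of_dvd_of_natDegree_le hmonic (hmonic.map τ) (minpoly.dvd K x hroot)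
    (natDegree_map_eq_of_injective τ.injective _).le

theorem exists_eq_algebraMap_of_minpoly_coeff_mem_range {k K L : Type*} [Field k] [IsAlgClosed k]
    [Field K] [Field L] [Algebra K L] (ι : k →+* K) {x : L} (hx : IsIntegral K x)
    (hcoeff : ∀ i, (minpoly K x).coeff i ∈ ι.range) :
    ∃ c : k, x = algebraMap K L (ι c) := by
  obtain ⟨P, hP⟩ := (mem_lifts _).mp ((lifts_iff_coeff_lifts _).mpr hcoeff)
  set ψ := (algebraMap K L).comp ι
  have hPψ : P.map ψ = (minpoly K x).map (algebraMap K L) := by rw [← map_map, hP]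
  have hne : P.map ψ ≠ 0 := by
    rw [hPψ, Polynomial.map_ne_zero_iff (algebraMap K L).injective]
    exact minpoly.ne_zero hx
  have hmem : x ∈ (P.map ψ).roots := by
    rw [mem_roots hne, IsRoot, hPψ, eval_map_algebraMap, minpoly.aeval]
  rw [(IsAlgClosed.splits P).roots_map ψ] at hmem
  obtain ⟨c, -, hc⟩ := Multiset.mem_map.mp hmem
  exact ⟨c, hc.symm⟩

/-- Lemma 3.4(i): let `k` be algebraically closed of characteristic zero and `σ` an
extension to the algebraic closure of `k(t)` of the shift automorphism `t ↦ t+1` of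
`k(t)` (characterized by fixing `k` and sending `t` to `t+1`).  If `σ^n f = f` for
some positive integer `n`, then `f ∈ k`. -/
theorem stmt9 {k : Type*} [Field k] [CharZero k] [IsAlgClosed k]
    (σ : RingAut (AlgebraicClosure (RatFunc k)))
    (hσk : ∀ a : k, σ (algebraMap (RatFunc k) (AlgebraicClosure (RatFunc k)) (RatFunc.C a))
      = algebraMap (RatFunc k) (AlgebraicClosure (RatFunc k)) (RatFunc.C a))
    (hσt : σ (algebraMap (RatFunc k) (AlgebraicClosure (RatFunc k)) RatFunc.X)
      = algebraMap (RatFunc k) (AlgebraicClosure (RatFunc k)) RatFunc.X + 1)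
    (f : AlgebraicClosure (RatFunc k)) (n : ℕ) (hn : 0 < n)
    (hf : (σ ^ n) f = f) :
    ∃ c : k, f = algebraMap (RatFunc k) (AlgebraicClosure (RatFunc k)) (RatFunc.C c) := by
  have hf_int : IsIntegral (RatFunc k) f := Algebra.IsIntegral.isIntegral f
  have hminpoly := minpoly_map_eq_self_of_apply_eq
    (RatFunc.ringAut_pow_comp_algebraMap σ hσk hσt n) hf_int hf
  refine exists_eq_algebraMap_of_minpoly_coeff_mem_range RatFunc.C hf_int fun i ↦ ?_
  obtain ⟨c, hc⟩ := RatFunc.eq_C_of_shift_eq (Nat.cast_ne_zero.mpr hn.ne')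
    (by rw [← coeff_map, hminpoly] : RatFunc.shift (n : k) ((minpoly _ f).coeff i) = _)
  exact ⟨c, hc.symm⟩
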